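/- Let Δ⁻¹, q ≫ L⁻¹ ≫ n⁻¹. Let G be a q-cut-dense graph on n vertices, v ∈ V(G), and U ⊆ V(G) with |U| ≥ L. Then there is a perfect Δ-ary tree of height at most 19·q⁻⁴, rooted at v, embedded in G with all its leaves mapped into U. -/

import Mathlib

/-!
Fix `L` vertices `U₁ ⊆ U`. Deleting, one at a time, vertices with fewer than `D` neighbours
across the cut `(U₁, U₁ᶜ)` leaves a bipartite `D`-core `A ⊆ U₁`, `B ⊆ U₁ᶜ`; since deleting costs
fewer than `D` cut edges per vertex, cut-density forces `|A| ≥ qL/4`.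

Let `Y₀ = A` and let `Y_{j+1}` be the set of vertices with at least `D` neighbours in `Y_j`.
The core gives `Y_j ⊆ Y_{j+2}`, so `P_j = Y_j ∪ Y_{j+1}` increases, and every vertex outside
`P_{j+1}` has fewer than `2D` neighbours in `P_j`. Cut-density across `(P_j, P_jᶜ)` bounds the
number of such vertices, so `|P_jᶜ|` shrinks by the factor `1 - q/2` at each step. After
`m = ⌈8/q²⌉` steps `|P_mᶜ| ≤ qn/4`, so `v`, of degree at least `q(n-1)`, has `2D` neighbours in
`P_m` and lies in some `Y_h` with `h ≤ m + 2 ≤ 19/q⁴`.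

The tree is then grown greedily downwards from `v ∈ Y_h`: a vertex of `Y_{j+1}` gets its children
among its `D` neighbours in `Y_j`. As `D` exceeds the size of the whole tree, fresh vertices are
always available, and the leaves land in `Y₀ ⊆ U`.
-/

def CutDense {V : Type} (G : SimpleGraph V) (q : ℝ) : Prop :=
  ∀ A B : Set V, A ∪ B = Set.univ → Disjoint A B →
    q * (A.ncard : ℝ) * (B.ncard : ℝ) ≤
      (Set.ncard {x : V × V | x.1 ∈ A ∧ x.2 ∈ B ∧ G.Adj x.1 x.2} : ℝ)

open Finset

namespace SimpleGraph

variable {W : Type*} {G : SimpleGraph W}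

/-- A cycle through a vertex maximising `f` would give that vertex two distinct neighbours
below it. -/
theorem isAcyclic_of_adj_le_imp_eq (f : W → ℕ)
    (hf : ∀ a b c, G.Adj a b → G.Adj a c → f b ≤ f a → f c ≤ f a → b = c) : G.IsAcyclic := by
  intro u c hc
  classical
  obtain ⟨y, hy, hmax⟩ := c.support.toFinset.exists_max_image f ⟨u, by simp⟩
  rw [List.mem_toFinset] at hy
  have hc' := hc.rotate hy
  have hle : ∀ z ∈ (c.rotate y hy).support, f z ≤ f y := fun z hz ↦
    hmax z (List.mem_toFinset.2 ((c.mem_support_rotate_iff y hy).1 hz))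
  refine hc'.snd_ne_penultimate (hf y _ _ (Walk.adj_snd hc'.not_nil)
    (Walk.adj_penultimate hc'.not_nil).symm ?_ ?_) <;>
  exact hle _ (Walk.getVert_mem_support _ _)

theorem Walk.le_add_length (f : W → ℕ) (hf : ∀ a b, G.Adj a b → f b ≤ f a + 1) {a b : W}
    (p : G.Walk a b) : f b ≤ f a + p.length := by
  induction p with
  | nil => simp
  | cons h p ih => have := hf _ _ h; rw [length_cons]; omega

end SimpleGraph

section degIn

variable {V : Type} {G : SimpleGraph V} [DecidableRel G.Adj]

variable (G) in
def degIn (A : Finset V) (x : V) : ℕ :=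
  #{y ∈ A | G.Adj x y}

lemma degIn_mono {A B : Finset V} (h : A ⊆ B) (x : V) : degIn G A x ≤ degIn G B x :=
  card_le_card (filter_subset_filter _ h)

lemma card_interedges_eq_sum_degIn (A B : Finset V) :
    #(G.interedges A B) = ∑ x ∈ A, degIn G B x := by
  simp only [SimpleGraph.interedges_def, card_filter, sum_product, degIn]

variable [DecidableEq V]

lemma degIn_union_le (A B : Finset V) (x : V) :
    degIn G (A ∪ B) x ≤ degIn G A x + degIn G B x := by
  rw [degIn, filter_union]
  exact card_union_le _ _

lemma degIn_le_degIn_add_card_compl [Fintype V] (A B : Finset V) (x : V) :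
    degIn G B x ≤ degIn G A x + #Aᶜ := by
  refine (card_le_card fun y hy ↦ ?_).trans (card_union_le {y ∈ A | G.Adj x y} Aᶜ)
  by_cases hyA : y ∈ A
  · exact mem_union_left _ (mem_filter.2 ⟨hyA, (mem_filter.1 hy).2⟩)
  · exact mem_union_right _ (mem_compl.2 hyA)

lemma card_interedges_erase_left {A : Finset V} {a : V} (ha : a ∈ A) (B : Finset V) :
    #(G.interedges A B) = #(G.interedges (A.erase a) B) + degIn G B a := by
  rw [card_interedges_eq_sum_degIn, card_interedges_eq_sum_degIn, sum_erase_add _ _ ha]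

lemma card_interedges_erase_right (A : Finset V) {B : Finset V} {b : V} (hb : b ∈ B) :
    #(G.interedges A B) = #(G.interedges A (B.erase b)) + degIn G A b := by
  have := G.symm
  have hcomm (S T : Finset V) : #(G.interedges S T) = #(G.interedges T S) :=
    Rel.card_interedges_comm _ _
  rw [hcomm, card_interedges_erase_left hb, hcomm]

theorem exists_bipartite_core (D : ℕ) (A B : Finset V) :
    ∃ A' ⊆ A, ∃ B' ⊆ B, (∀ a ∈ A', D ≤ degIn G B' a) ∧ (∀ b ∈ B', D ≤ degIn G A' b) ∧
      #(G.interedges A B) ≤ #(G.interedges A' B') + D * (#A + #B) := by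
  induction hn : #A + #B using Nat.strong_induction_on generalizing A B with
  | _ n ih =>
  by_cases hlowA : ∃ a ∈ A, degIn G B a < D
  · obtain ⟨a, ha, hlow⟩ := hlowA
    have hcard := card_erase_add_one ha
    obtain ⟨A', hA', B', hB', hcore⟩ := ih _ (by omega) (A.erase a) B rfl
    refine ⟨A', hA'.trans (erase_subset a A), B', hB', hcore.1, hcore.2.1, ?_⟩
    have := hcore.2.2
    rw [card_interedges_erase_left ha]
    nlinarith
  by_cases hlowB : ∃ b ∈ B, degIn G A b < D
  · obtain ⟨b, hb, hlow⟩ := hlowB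
    have hcard := card_erase_add_one hb
    obtain ⟨A', hA', B', hB', hcore⟩ := ih _ (by omega) A (B.erase b) rfl
    refine ⟨A', hA', B', hB'.trans (erase_subset b B), hcore.1, hcore.2.1, ?_⟩
    have := hcore.2.2
    rw [card_interedges_erase_right A hb]
    nlinarith
  push Not at hlowA hlowB
  exact ⟨A, subset_rfl, B, subset_rfl, hlowA, hlowB, Nat.le_add_right _ _⟩

end degIn

lemma one_sub_pow_mul_one_add_mul_le {x : ℝ} (h0 : 0 ≤ x) (h1 : x ≤ 1) (k : ℕ) :
    (1 - x) ^ k * (1 + k * x) ≤ 1 :=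
  calc (1 - x) ^ k * (1 + k * x) ≤ (1 - x) ^ k * (1 + x) ^ k := by
        gcongr
        exact one_add_mul_le_pow (by linarith) k
    _ = (1 - x ^ 2) ^ k := by rw [← mul_pow]; ring
    _ ≤ 1 := pow_le_one₀ (by nlinarith) (by nlinarith)

lemma ceil_eight_div_sq_add_two_le {q : ℝ} (hq : 0 < q) (hq1 : q ≤ 1) :
    ((⌈8 / q ^ 2⌉₊ + 2 : ℕ) : ℝ) ≤ 19 / q ^ 4 := by
  have hq2 : 0 < q ^ 2 := by positivity
  have hceil := Nat.ceil_lt_add_one (div_pos (by norm_num : (0 : ℝ) < 8) hq2).le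
  have h4 : q ^ 4 ≤ q ^ 2 := pow_le_pow_of_le_one hq.le hq1 (by norm_num)
  have h2 : q ^ 2 ≤ 1 := pow_le_one₀ hq.le hq1
  rw [le_div_iff₀ (by positivity)]
  push_cast
  have : 8 / q ^ 2 * q ^ 4 = 8 * q ^ 2 := by field_simp
  nlinarith

section CutDense

variable {V : Type} [Fintype V] {G : SimpleGraph V} [DecidableRel G.Adj] {q : ℝ}

variable (G) in
def heavyNbhd (D : ℕ) (S : Finset V) : Finset V :=
  {x | D ≤ degIn G S x}

lemma mem_heavyNbhd {D : ℕ} {S : Finset V} {x : V} : x ∈ heavyNbhd G D S ↔ D ≤ degIn G S x := by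
  simp [heavyNbhd]

lemma heavyNbhd_mono (D : ℕ) : Monotone (heavyNbhd G D) := fun _ _ h _ hx ↦
  mem_heavyNbhd.2 ((mem_heavyNbhd.1 hx).trans (degIn_mono h _))

lemma subset_heavyNbhd_heavyNbhd {D : ℕ} {A B : Finset V} (hA : ∀ a ∈ A, D ≤ degIn G B a)
    (hB : ∀ b ∈ B, D ≤ degIn G A b) : A ⊆ heavyNbhd G D (heavyNbhd G D A) :=
  fun a ha ↦ mem_heavyNbhd.2 ((hA a ha).trans
    (degIn_mono (fun b hb ↦ mem_heavyNbhd.2 (hB b hb)) a))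

variable [DecidableEq V]

lemma CutDense.le_card_interedges (hG : CutDense G q) (A : Finset V) :
    q * #A * #Aᶜ ≤ #(G.interedges A Aᶜ) := by
  have h := hG A ↑Aᶜ (by simp) (by simpa using disjoint_compl_right)
  have hset : {x : V × V | x.1 ∈ (A : Set V) ∧ x.2 ∈ (↑Aᶜ : Set V) ∧ G.Adj x.1 x.2} =
      ↑(G.interedges A Aᶜ) := by
    ext; simp [SimpleGraph.mem_interedges_iff]
  rwa [Set.ncard_coe_finset, Set.ncard_coe_finset, hset, Set.ncard_coe_finset] at h

lemma CutDense.le_one (hG : CutDense G q) (hn : 2 ≤ Fintype.card V) : q ≤ 1 := by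
  obtain ⟨x⟩ : Nonempty V := Fintype.card_pos_iff.1 (by omega)
  have hpos : (0 : ℝ) < #({x}ᶜ : Finset V) := by
    rw [card_compl, card_singleton]; exact_mod_cast (by omega : 0 < Fintype.card V - 1)
  have hcut := hG.le_card_interedges {x}
  have hle : (#(G.interedges {x} {x}ᶜ) : ℝ) ≤ #({x} : Finset V) * #({x}ᶜ : Finset V) := by
    exact_mod_cast SimpleGraph.card_interedges_le_mul G {x} {x}ᶜ
  rw [card_singleton, Nat.cast_one] at hcut hle
  nlinarith

lemma CutDense.sub_card_compl_le_degIn (hG : CutDense G q) (A : Finset V) (x : V) :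
    q * (Fintype.card V - 1) - #Aᶜ ≤ degIn G A x := by
  have hcut := hG.le_card_interedges {x}
  rw [card_interedges_eq_sum_degIn, sum_singleton, card_singleton, card_compl, card_singleton,
    Nat.cast_sub (Fintype.card_pos_iff.2 ⟨x⟩), Nat.cast_one, mul_one] at hcut
  have : (degIn G {x}ᶜ x : ℝ) ≤ degIn G A x + #Aᶜ := by
    exact_mod_cast degIn_le_degIn_add_card_compl A {x}ᶜ x
  linarith

lemma CutDense.card_filter_degIn_lt_le (hG : CutDense G q) {A : Finset V} (hA : A.Nonempty)
    {d : ℕ} (hd : d ≤ q * #A / 2) :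
    (#{y ∈ Aᶜ | degIn G A y < d} : ℝ) ≤ (1 - q / 2) * #Aᶜ := by
  set b := #{y ∈ Aᶜ | degIn G A y < d}
  set g := #{y ∈ Aᶜ | ¬degIn G A y < d}
  have hsplit : ∑ y ∈ Aᶜ, degIn G A y ≤ b * d + g * #A := by
    rw [← sum_filter_add_sum_filter_not _ (fun y ↦ degIn G A y < d)]
    gcongr
    · exact sum_le_card_nsmul _ _ _ fun y hy ↦ (mem_filter.1 hy).2.le
    · exact sum_le_card_nsmul _ _ _ fun y _ ↦ card_filter_le _ _
  have hg : (g : ℝ) = #Aᶜ - b := by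
    rw [← card_filter_add_card_filter_not (s := Aᶜ) (fun y ↦ degIn G A y < d)]; push_cast; ring
  have hcut := hG.le_card_interedges Aᶜ
  rw [compl_compl, card_interedges_eq_sum_degIn] at hcut
  have hsplit' : ((∑ y ∈ Aᶜ, degIn G A y : ℕ) : ℝ) ≤ b * d + g * #A := by exact_mod_cast hsplit
  have ha : (0 : ℝ) < #A := by exact_mod_cast hA.card_pos
  have hb : (b : ℝ) ≤ #Aᶜ := by exact_mod_cast card_filter_le _ _
  have : q * #Aᶜ ≤ b * q / 2 + #Aᶜ - b := by
    refine le_of_mul_le_mul_right ?_ ha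
    nlinarith [mul_le_mul_of_nonneg_left hd (Nat.cast_nonneg b)]
  nlinarith

lemma compl_heavyNbhd_union_subset (D : ℕ) (S T : Finset V) :
    (heavyNbhd G D S ∪ heavyNbhd G D T)ᶜ ⊆ ({y | degIn G (S ∪ T) y < 2 * D} : Finset V) :=
    fun y hy ↦ by
  simp only [compl_union, mem_inter, mem_compl, mem_heavyNbhd, not_le] at hy
  have := degIn_union_le S T y (G := G)
  simp only [mem_filter, mem_univ, true_and]
  omega

theorem CutDense.exists_large_core (hG : CutDense G q) (hq : 0 < q) {D : ℕ} (U : Finset V)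
    (hn : 2 * #U ≤ Fintype.card V) (hD : 4 * D ≤ q * #U) :
    ∃ A ⊆ U, A ⊆ heavyNbhd G D (heavyNbhd G D A) ∧ q * #U / 4 ≤ #A := by
  obtain ⟨A, hAU, B, -, hA, hB, hedges⟩ := exists_bipartite_core (G := G) D U Uᶜ
  refine ⟨A, hAU, subset_heavyNbhd_heavyNbhd hA hB, ?_⟩
  have hcut := hG.le_card_interedges U
  have hAB : #(G.interedges A B) ≤ #A * Fintype.card V :=
    (SimpleGraph.card_interedges_le_mul G A B).trans (Nat.mul_le_mul_left _ (card_le_univ B))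
  have hsum : #U + #Uᶜ = Fintype.card V := card_add_card_compl U
  have hedges' : (#(G.interedges U Uᶜ) : ℝ) ≤ (#A + D) * (#U + #Uᶜ) := by
    rw [← hsum] at hAB
    exact_mod_cast (by nlinarith : #(G.interedges U Uᶜ) ≤ (#A + D) * (#U + #Uᶜ))
  have hn' : (#U : ℝ) ≤ #Uᶜ := by exact_mod_cast (by omega : #U ≤ #Uᶜ)
  rcases (Nat.cast_nonneg (α := ℝ) #U).eq_or_lt with hU | hU
  · rw [← hU]; simp
  have : q * #U / 2 * (#U + #Uᶜ) ≤ (#A + D) * (#U + #Uᶜ) := by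
    nlinarith [mul_le_mul_of_nonneg_left hn' (mul_pos hq hU).le]
  have := le_of_mul_le_mul_right this (by linarith)
  linarith

lemma CutDense.card_compl_iterate_le (hG : CutDense G q) (hq : 0 < q) (hq1 : q ≤ 1) {D : ℕ}
    {A : Finset V} (hA : A.Nonempty) (hAA : A ⊆ heavyNbhd G D (heavyNbhd G D A))
    (hAD : 4 * D ≤ q * #A) (j : ℕ) :
    (#((heavyNbhd G D)^[j] A ∪ (heavyNbhd G D)^[j + 1] A)ᶜ : ℝ) ≤
      (1 - q / 2) ^ j * Fintype.card V := by
  set f := heavyNbhd G D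
  set P : ℕ → Finset V := fun i ↦ f^[i] A ∪ f^[i + 1] A
  have hP : ∀ i, P i ⊆ P (i + 1) := fun i ↦ by
    refine union_subset (subset_union_right.trans' ?_) subset_union_left
    rw [Function.iterate_add_apply]
    exact (heavyNbhd_mono D).iterate i hAA
  have hAP : ∀ i, A ⊆ P i := fun i ↦ by
    induction i with
    | zero => exact subset_union_left
    | succ i ih => exact ih.trans (hP i)
  induction j with
  | zero => simpa using card_le_univ _
  | succ j ih =>
    have hsub : (P (j + 1))ᶜ ⊆ {y ∈ (P j)ᶜ | degIn G (P j) y < 2 * D} := fun y hy ↦ by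
      have hy' := compl_heavyNbhd_union_subset D _ _ (by
        simpa only [P, Function.iterate_succ_apply'] using hy)
      refine mem_filter.2 ⟨compl_subset_compl.2 (hP j) hy, ?_⟩
      simpa only [P, Function.iterate_succ_apply'] using (mem_filter.1 hy').2
    have hd : ((2 * D : ℕ) : ℝ) ≤ q * #(P j) / 2 := by
      have : (#A : ℝ) ≤ #(P j) := by exact_mod_cast card_le_card (hAP j)
      push_cast; nlinarith
    calc (#(P (j + 1))ᶜ : ℝ) ≤ #{y ∈ (P j)ᶜ | degIn G (P j) y < 2 * D} := by
          exact_mod_cast card_le_card hsub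
      _ ≤ (1 - q / 2) * #(P j)ᶜ := hG.card_filter_degIn_lt_le (hA.mono (hAP j)) hd
      _ ≤ (1 - q / 2) * ((1 - q / 2) ^ j * Fintype.card V) := by gcongr; linarith
      _ = (1 - q / 2) ^ (j + 1) * Fintype.card V := by ring

theorem CutDense.exists_mem_iterate_heavyNbhd (hG : CutDense G q) (hq : 0 < q) (hq1 : q ≤ 1)
    {D : ℕ} {A : Finset V} (hA : A.Nonempty) (hAA : A ⊆ heavyNbhd G D (heavyNbhd G D A))
    (hAD : 4 * D ≤ q * #A) (hn : 4 * (D + 1) ≤ q * Fintype.card V) (x : V) :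
    ∃ h ≤ ⌈8 / q ^ 2⌉₊ + 2, x ∈ (heavyNbhd G D)^[h] A := by
  set m := ⌈8 / q ^ 2⌉₊
  set f := heavyNbhd G D
  have hpow : (1 - q / 2) ^ m ≤ q / 4 := by
    have hbound := one_sub_pow_mul_one_add_mul_le (x := q / 2) (by positivity) (by linarith) m
    have hm : 8 ≤ m * q ^ 2 := (div_le_iff₀ (by positivity)).1 (Nat.le_ceil _)
    have : 0 ≤ (1 - q / 2) ^ m := pow_nonneg (by linarith) m
    nlinarith [mul_le_mul_of_nonneg_left hm this]
  have hcompl := hG.card_compl_iterate_le hq hq1 hA hAA hAD m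
  have hdeg := hG.sub_card_compl_le_degIn (f^[m] A ∪ f^[m + 1] A) x
  have h2D : 2 * D ≤ degIn G (f^[m] A ∪ f^[m + 1] A) x := by
    have := mul_le_mul_of_nonneg_right hpow (Nat.cast_nonneg (Fintype.card V))
    have : (2 * D : ℝ) ≤ degIn G (f^[m] A ∪ f^[m + 1] A) x := by nlinarith
    exact_mod_cast this
  have hsplit := degIn_union_le (G := G) (f^[m] A) (f^[m + 1] A) x
  by_cases hlow : D ≤ degIn G (f^[m] A) x
  · refine ⟨m + 1, by omega, ?_⟩
    rw [Function.iterate_succ_apply']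
    exact mem_heavyNbhd.2 hlow
  · refine ⟨m + 2, le_rfl, ?_⟩
    rw [Function.iterate_succ_apply']
    exact mem_heavyNbhd.2 (by omega)

end CutDense

structure ParentTree {V : Type} (G : SimpleGraph V) where
  verts : Finset V
  root : V
  parent : V → V
  level : V → ℕ
  root_mem : root ∈ verts
  level_root : level root = 0
  parent_mem : ∀ y ∈ verts, y ≠ root → parent y ∈ verts
  adj_parent : ∀ y ∈ verts, y ≠ root → G.Adj y (parent y)
  level_parent : ∀ y ∈ verts, y ≠ root → level y = level (parent y) + 1

namespace ParentTree

variable {V : Type} {G : SimpleGraph V}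

def single (x : V) : ParentTree G where
  verts := {x}
  root := x
  parent := id
  level _ := 0
  root_mem := mem_singleton_self x
  level_root := rfl
  parent_mem _ hy hyx := absurd (mem_singleton.1 hy) hyx
  adj_parent _ hy hyx := absurd (mem_singleton.1 hy) hyx
  level_parent _ hy hyx := absurd (mem_singleton.1 hy) hyx

def toSubgraph (T : ParentTree G) : G.Subgraph where
  verts := T.verts
  Adj a b := (a ∈ T.verts ∧ a ≠ T.root ∧ T.parent a = b) ∨
    (b ∈ T.verts ∧ b ≠ T.root ∧ T.parent b = a)
  adj_sub := by
    rintro a b (⟨ha, har, rfl⟩ | ⟨hb, hbr, rfl⟩)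
    exacts [T.adj_parent a ha har, (T.adj_parent b hb hbr).symm]
  edge_vert := by
    rintro a b (⟨ha, -, -⟩ | ⟨hb, hbr, rfl⟩)
    exacts [ha, T.parent_mem b hb hbr]
  symm := ⟨fun _ _ ↦ Or.symm⟩

variable {T : ParentTree G}

lemma level_le_of_toSubgraph_adj {a b : V} (h : T.toSubgraph.Adj a b) :
    T.level b ≤ T.level a + 1 := by
  rcases h with ⟨ha, har, rfl⟩ | ⟨hb, hbr, rfl⟩
  · have := T.level_parent a ha har; omega
  · exact (T.level_parent b hb hbr).le

lemma parent_eq_of_toSubgraph_adj {a b : V} (h : T.toSubgraph.Adj a b)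
    (hle : T.level b ≤ T.level a) : T.parent a = b := by
  rcases h with ⟨-, -, rfl⟩ | ⟨hb, hbr, rfl⟩
  · rfl
  · have := T.level_parent b hb hbr; omega

lemma isAcyclic_toSubgraph : T.toSubgraph.coe.IsAcyclic :=
  SimpleGraph.isAcyclic_of_adj_le_imp_eq (fun y ↦ T.level y) fun _ _ _ hb hc hbl hcl ↦
    Subtype.ext ((parent_eq_of_toSubgraph_adj hb hbl).symm.trans
      (parent_eq_of_toSubgraph_adj hc hcl))

lemma exists_walk_toSubgraph_root (y : V) (hy : y ∈ T.verts) :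
    ∃ p : T.toSubgraph.coe.Walk ⟨y, hy⟩ ⟨T.root, T.root_mem⟩, p.length = T.level y := by
  induction hl : T.level y generalizing y with
  | zero =>
    obtain rfl : y = T.root := by
      by_contra hyr; have := T.level_parent y hy hyr; omega
    exact ⟨.nil, rfl⟩
  | succ n ih =>
    have hyr : y ≠ T.root := by rintro rfl; rw [T.level_root] at hl; omega
    have hp := T.parent_mem y hy hyr
    obtain ⟨p, hpl⟩ := ih (T.parent y) hp (by have := T.level_parent y hy hyr; omega)
    exact ⟨.cons (show T.toSubgraph.coe.Adj ⟨y, hy⟩ ⟨T.parent y, hp⟩ from .inl ⟨hy, hyr, rfl⟩) p,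
      by rw [SimpleGraph.Walk.length_cons, hpl]⟩

lemma isTree_toSubgraph : T.toSubgraph.coe.IsTree := by
  refine ⟨(SimpleGraph.connected_iff _).2 ⟨fun a b ↦ ?_, ⟨⟨T.root, T.root_mem⟩⟩⟩,
    isAcyclic_toSubgraph⟩
  obtain ⟨pa, -⟩ := exists_walk_toSubgraph_root a.1 a.2
  obtain ⟨pb, -⟩ := exists_walk_toSubgraph_root b.1 b.2
  exact ⟨pa.append pb.reverse⟩

lemma dist_toSubgraph_root (y : V) (hy : y ∈ T.verts) :
    T.toSubgraph.coe.dist ⟨T.root, T.root_mem⟩ ⟨y, hy⟩ = T.level y := by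
  obtain ⟨p, hp⟩ := exists_walk_toSubgraph_root y hy
  obtain ⟨q, hq⟩ := p.reverse.reachable.exists_walk_length_eq_dist
  have := q.le_add_length (fun z : T.toSubgraph.verts ↦ T.level z)
    fun _ _ h ↦ level_le_of_toSubgraph_adj h
  have := SimpleGraph.dist_le p.reverse
  simp only [T.level_root, SimpleGraph.Walk.length_reverse] at *
  omega

variable [DecidableEq V]

def children (T : ParentTree G) (y : V) : Finset V :=
  {z ∈ T.verts | z ≠ T.root ∧ T.parent z = y}

lemma neighborSet_toSubgraph (y : V) (hy : y ∈ T.verts) :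
    T.toSubgraph.neighborSet y =
      ↑(T.children y ∪ if y = T.root then ∅ else {T.parent y}) := by
  ext w
  simp only [SimpleGraph.Subgraph.mem_neighborSet, toSubgraph, children, coe_union, coe_filter]
  split_ifs <;> simp <;> grind

lemma ncard_neighborSet_toSubgraph (y : V) (hy : y ∈ T.verts) :
    (T.toSubgraph.neighborSet y).ncard = #(T.children y) + if y = T.root then 0 else 1 := by
  rw [neighborSet_toSubgraph y hy, Set.ncard_coe_finset]
  split_ifs with hyr
  · simp
  · rw [card_union_of_disjoint (disjoint_singleton_right.2 fun h ↦ ?_), card_singleton]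
    have h1 := T.level_parent y hy hyr
    have h2 := T.level_parent _ (mem_filter.1 h).1 (mem_filter.1 h).2.1
    rw [(mem_filter.1 h).2.2] at h2
    omega

@[simp] lemma children_single (x y : V) : (single x : ParentTree G).children y = ∅ := by
  ext z; simp [children, single]; grind

variable (T) (S : ParentTree G) (hadj : G.Adj S.root T.root) (hdisj : Disjoint T.verts S.verts)

@[simps]
def graft : ParentTree G where
  verts := T.verts ∪ S.verts
  root := T.root
  parent w := if w ∈ S.verts then (if w = S.root then T.root else S.parent w) else T.parent w
  level w := if w ∈ S.verts then S.level w + 1 else T.level w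
  root_mem := mem_union_left _ T.root_mem
  level_root := by simp [disjoint_left.1 hdisj T.root_mem, T.level_root]
  parent_mem y hy hyr := by grind [T.root_mem, S.parent_mem y, T.parent_mem y]
  adj_parent y hy hyr := by grind [S.adj_parent y, T.adj_parent y]
  level_parent y hy hyr := by
    grind [S.level_parent y, T.level_parent y, S.parent_mem y, T.parent_mem y,
      disjoint_left.1 hdisj, T.level_root, S.level_root, T.root_mem]

lemma children_graft_of_mem_left {y : V} (hy : y ∈ T.verts) :
    (T.graft S hadj hdisj).children y =
      T.children y ∪ (if y = T.root then {S.root} else ∅) := by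
  have := S.parent_mem; have := disjoint_left.1 hdisj; have := S.root_mem; have := T.root_mem
  ext z
  simp only [children, graft]
  grind

lemma children_graft_of_mem_right {y : V} (hy : y ∈ S.verts) :
    (T.graft S hadj hdisj).children y = S.children y := by
  ext z
  simp only [children, graft]
  grind [T.parent_mem, disjoint_left.1 hdisj, T.root_mem]

def IsPerfect (k b t : ℕ) : Prop :=
  ∀ y ∈ T.verts, #(T.children y) = if T.level y = t then 0 else if y = T.root then b else k

variable {T S}

lemma isPerfect_single (x : V) {k b t : ℕ} (h : t = 0 ∨ b = 0) :
    (single x : ParentTree G).IsPerfect k b t := by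
  intro y hy
  rw [children_single, card_empty]
  simp only [single, mem_singleton] at hy ⊢
  grind

lemma level_graft_eq_imp_mem {A : Finset V} {t : ℕ}
    (hT : ∀ y ∈ T.verts, T.level y = t + 1 → y ∈ A) (hS : ∀ y ∈ S.verts, S.level y = t → y ∈ A) :
    ∀ y ∈ (T.graft S hadj hdisj).verts, (T.graft S hadj hdisj).level y = t + 1 → y ∈ A := by
  intro y hy hlev
  rw [graft_verts] at hy
  rw [graft_level] at hlev
  split_ifs at hlev with hyS
  · exact hS y hyS (by omega)
  · exact hT y ((mem_union.1 hy).resolve_right hyS) hlev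

lemma IsPerfect.graft {k m t : ℕ} (hT : T.IsPerfect k m (t + 1)) (hS : S.IsPerfect k k t) :
    (T.graft S hadj hdisj).IsPerfect k (m + 1) (t + 1) := by
  intro y hy
  rw [graft_verts] at hy
  rw [graft_level, graft_root]
  rcases mem_union.1 hy with hyT | hyS
  · have hyS := disjoint_left.1 hdisj hyT
    have hroot : S.root ∉ T.children y := fun h ↦
      disjoint_right.1 hdisj S.root_mem (mem_filter.1 h).1
    rw [children_graft_of_mem_left _ _ _ _ hyT, if_neg hyS]
    have := hT y hyT
    have := T.level_root
    split_ifs at * <;> simp_all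
  · have hyT : y ∉ T.verts := disjoint_right.1 hdisj hyS
    rw [children_graft_of_mem_right _ _ _ _ hyS, hS y hyS, if_pos hyS]
    have := T.root_mem
    split_ifs <;> grind

lemma IsPerfect.ncard_neighborSet {Δ h : ℕ} (hΔ : 1 ≤ Δ) (hT : T.IsPerfect (Δ - 1) Δ h)
    {U : Set V} (hU : ∀ y ∈ T.verts, T.level y = h → y ∈ U) (u : V)
    (hu : u ∈ T.toSubgraph.verts) :
    (T.toSubgraph.neighborSet u).ncard = Δ ∨ ((T.toSubgraph.neighborSet u).ncard ≤ 1 ∧ u ∈ U ∧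
      T.toSubgraph.coe.dist ⟨T.root, T.root_mem⟩ ⟨u, hu⟩ = h) := by
  rw [ncard_neighborSet_toSubgraph u hu, hT u hu, dist_toSubgraph_root u hu]
  by_cases hlev : T.level u = h
  · exact .inr ⟨by split_ifs <;> simp, hU u hu hlev, hlev⟩
  · left
    split_ifs <;> omega

end ParentTree

section Embedding

variable {V : Type} {G : SimpleGraph V} [DecidableRel G.Adj]

lemma exists_adj_notMem_of_card_lt_degIn {S F : Finset V} {x : V} (h : #F < degIn G S x) :
    ∃ r ∈ S, G.Adj x r ∧ r ∉ F := by
  obtain ⟨r, hr, hrF⟩ := exists_mem_notMem_of_card_lt_card h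
  exact ⟨r, (mem_filter.1 hr).1, (mem_filter.1 hr).2, hrF⟩

variable [DecidableEq V]

/-- The size bound `(b + 1) * (k + 1) ^ t` is additive in `b`: grafting one more subtree, of
height `t - 1` and branching `k`, adds at most `(k + 1) ^ t` vertices. -/
theorem exists_isPerfect_parentTree_of_layers {Y : ℕ → Finset V} {D : ℕ}
    (hY : ∀ j, ∀ x ∈ Y (j + 1), D ≤ degIn G (Y j) x) (k : ℕ) :
    ∀ t b x (F : Finset V), x ∈ Y t → x ∉ F → #F + (b + 1) * (k + 1) ^ t ≤ D →
      ∃ T : ParentTree G, T.root = x ∧ Disjoint T.verts F ∧ #T.verts ≤ (b + 1) * (k + 1) ^ t ∧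
        (∀ y ∈ T.verts, T.level y = t → y ∈ Y 0) ∧ T.IsPerfect k b t := by
  intro t
  induction t with
  | zero =>
    intro b x F hx hxF _
    refine ⟨.single x, rfl, disjoint_singleton_left.2 hxF, by simp [ParentTree.single],
      fun y hy _ ↦ ?_, ParentTree.isPerfect_single x (.inl rfl)⟩
    rwa [mem_singleton.1 hy]
  | succ t ih =>
    intro b
    induction b with
    | zero =>
      intro x F _ hxF _
      refine ⟨.single x, rfl, disjoint_singleton_left.2 hxF,
        by simp [ParentTree.single, Nat.one_le_iff_ne_zero], fun y _ hy ↦ absurd hy (by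
        simp [ParentTree.single]), ParentTree.isPerfect_single x (.inr rfl)⟩
    | succ m ihm =>
      intro x F hx hxF hF
      have hsplit : (m + 1 + 1) * (k + 1) ^ (t + 1) =
          (m + 1) * (k + 1) ^ (t + 1) + (k + 1) * (k + 1) ^ t := by ring
      have hpos : 0 < (k + 1) * (k + 1) ^ t := by positivity
      obtain ⟨T, rfl, hTF, hTcard, hTleaf, hT⟩ := ihm x F hx hxF (by omega)
      have hFT := card_union_le F T.verts
      obtain ⟨r, hrY, hadj, hrFT⟩ :=
        exists_adj_notMem_of_card_lt_degIn ((by omega : #(F ∪ T.verts) < D).trans_le (hY t _ hx))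
      obtain ⟨S, rfl, hSF, hScard, hSleaf, hS⟩ := ih k r (F ∪ T.verts) hrY hrFT (by omega)
      have hdisj : Disjoint T.verts S.verts := (disjoint_union_right.1 hSF).2.symm
      refine ⟨T.graft S hadj.symm hdisj, rfl, ?_, ?_,
        ParentTree.level_graft_eq_imp_mem _ _ hTleaf hSleaf, hT.graft hadj.symm hdisj hS⟩
      · exact disjoint_union_left.2 ⟨hTF, (disjoint_union_right.1 hSF).1⟩
      · have := card_union_le T.verts S.verts
        simp only [ParentTree.graft_verts]
        omega

variable [Fintype V] {q : ℝ}

theorem CutDense.exists_isPerfect_parentTree (hG : CutDense G q) (hq : 0 < q) (hq1 : q ≤ 1)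
    {Δ D : ℕ} (hΔ : 1 ≤ Δ) (hD : (Δ + 1) * Δ ^ (⌈8 / q ^ 2⌉₊ + 2) ≤ D) (U : Finset V)
    (hUn : 2 * #U ≤ Fintype.card V) (hUD : 16 * D ≤ q ^ 2 * #U)
    (hnD : 4 * (D + 1) ≤ q * Fintype.card V) (v : V) :
    ∃ T : ParentTree G, T.root = v ∧ ∃ h ≤ ⌈8 / q ^ 2⌉₊ + 2,
      T.IsPerfect (Δ - 1) Δ h ∧ ∀ y ∈ T.verts, T.level y = h → y ∈ U := by
  have hDpos : (0 : ℝ) < D := by exact_mod_cast (by positivity : 0 < (Δ + 1) * Δ ^ _).trans_le hD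
  obtain ⟨A, hAU, hAA, hA⟩ := hG.exists_large_core (D := D) hq U hUn (by nlinarith)
  have hAne : A.Nonempty := card_pos.1 (by exact_mod_cast (by nlinarith : (0 : ℝ) < #A))
  obtain ⟨h, hhm, hv⟩ := hG.exists_mem_iterate_heavyNbhd hq hq1 hAne hAA (by nlinarith) hnD v
  obtain ⟨T, rfl, -, -, hleaf, hT⟩ := exists_isPerfect_parentTree_of_layers
    (Y := fun j ↦ (heavyNbhd G D)^[j] A)
    (fun j x hx ↦ mem_heavyNbhd.1 (by rwa [Function.iterate_succ_apply'] at hx))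
    (Δ - 1) h Δ v ∅ hv (notMem_empty v) (by
      rw [card_empty, zero_add, Nat.sub_add_cancel hΔ]
      exact (Nat.mul_le_mul_left _ (Nat.pow_le_pow_right hΔ hhm)).trans hD)
  exact ⟨T, rfl, h, hhm, hT, fun y hy hly ↦ hAU (hleaf y hy hly)⟩

end Embedding

/-- Let `Δ⁻¹, q ≫ L⁻¹ ≫ n⁻¹`. Let `G` be a `q`-cut-dense graph on `n`
vertices, `v ∈ V(G)`, and `U ⊆ V(G)` with `|U| ≥ L`. Then there is a perfect `Δ`-ary
tree of height `h ≤ 19·q⁻⁴` rooted at `v` embedded in `G` (a subgraph which is a tree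
containing `v`, every vertex of which either has degree `Δ` or is a leaf lying in `U` at
distance exactly `h` from `v`). -/
theorem stmt18 (Δ : ℕ) (hΔ : 1 ≤ Δ) (q : ℝ) (hq : 0 < q) :
    ∃ L₀ : ℕ, ∀ L : ℕ, L₀ ≤ L → ∃ n₀ : ℕ,
      ∀ (V : Type) [Fintype V], n₀ ≤ Fintype.card V →
        ∀ (G : SimpleGraph V), CutDense G q →
          ∀ (v : V) (U : Set V), L ≤ U.ncard →
            ∃ (H : G.Subgraph) (hv : v ∈ H.verts) (h : ℕ),
              H.coe.IsTree ∧ (h : ℝ) ≤ 19 / q ^ 4 ∧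
              ∀ u : V, ∀ hu : u ∈ H.verts,
                (H.neighborSet u).ncard = Δ ∨
                ((H.neighborSet u).ncard ≤ 1 ∧ u ∈ U ∧
                  H.coe.dist ⟨v, hv⟩ ⟨u, hu⟩ = h) := by
  classical
  set D := (Δ + 1) * Δ ^ (⌈8 / q ^ 2⌉₊ + 2)
  refine ⟨⌈16 * D / q ^ 2⌉₊, fun L hL ↦ ⟨2 * L + ⌈4 * (D + 1) / q⌉₊, fun V _ hn G hG v U hU ↦ ?_⟩⟩
  have hLD : 16 * D ≤ q ^ 2 * L :=
    (div_le_iff₀' (by positivity)).1 ((Nat.le_ceil _).trans (by exact_mod_cast hL))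
  have hL : 1 ≤ L := by
    have : (0 : ℝ) < L := by nlinarith [(by positivity : (0 : ℝ) < D)]
    exact_mod_cast this
  have hq1 : q ≤ 1 := hG.le_one (by omega)
  have hnD : 4 * (D + 1) ≤ q * Fintype.card V := by
    have : ⌈4 * ((D : ℝ) + 1) / q⌉₊ ≤ Fintype.card V := by omega
    exact (div_le_iff₀' hq).1 ((Nat.le_ceil _).trans (by exact_mod_cast this))
  obtain ⟨U₁, hU₁U, hU₁⟩ :=
    exists_subset_card_eq (show L ≤ #U.toFinset by rwa [← Set.ncard_eq_toFinset_card'])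
  obtain ⟨T, rfl, h, hhm, hT, hleaf⟩ := hG.exists_isPerfect_parentTree hq hq1 hΔ le_rfl U₁
    (by omega) (by rwa [hU₁]) hnD v
  exact ⟨T.toSubgraph, T.root_mem, h, ParentTree.isTree_toSubgraph,
    (Nat.cast_le.2 hhm).trans (ceil_eight_div_sq_add_two_le hq hq1),
    hT.ncard_neighborSet hΔ fun y hy hly ↦ Set.mem_toFinset.1 (hU₁U (hleaf y hy hly))⟩
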